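/- There exists a constant C > 0 such that for every real b ∈ [−1/2, 1/2] and every real E ≥ 1, |N_b(E) − (E/4)·log E − (γ − log 2 − 1/2)·(E/2)| ≤ C·√E, where N_b(E) = #{(n,k) ∈ ℕ×ℤ : 4n(n+|k−b|) ≤ E} and γ is the Euler–Mascheroni constant. In particular the first two terms of the Weyl asymptotics for the Aharonov–Bohm Laplacian on the Grushin sphere are independent of the flux b. -/

import Mathlib

/-!
For fixed `n ≥ 1` the admissible `k` are the integers in `[b - w, b + w]`, `w = E/(4n) - n`,
and there are `2w + O(1)` of them whatever `b` is. With `M = ⌊√E/2⌋` this gives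
`N_b(E) = (E/2) H_M - M(M+1) + O(M)`, and inserting `H_M = log M + γ + O(1/M)`,
`log (2M) = log √E + O(1/M)` and `M² = E/4 + O(√E)` leaves a remainder `O(√E)`.
-/

open Real Finset

noncomputable def weylCount (b E : ℝ) : ℕ :=
  Set.ncard {p : ℕ × ℤ | 0 < p.1 ∧ 4 * p.1 * ((p.1 : ℝ) + |(p.2 : ℝ) - b|) ≤ E}

lemma abs_card_Icc_ceil_floor_sub_le {x y : ℝ} (hxy : x ≤ y) :
    |(#(Icc ⌈x⌉ ⌊y⌋) : ℝ) - (y - x)| ≤ 1 := by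
  have hle : ⌈x⌉ ≤ ⌊y⌋ + 1 := (Int.ceil_le_floor_add_one x).trans (by gcongr)
  have hcard : ((#(Icc ⌈x⌉ ⌊y⌋) : ℤ) : ℝ) = ⌊y⌋ + 1 - ⌈x⌉ := by
    rw [Int.card_Icc, Int.toNat_of_nonneg (by omega)]
    push_cast
    ring
  push_cast at hcard
  rw [hcard, abs_le]
  constructor <;>
    linarith [Int.floor_le y, Int.lt_floor_add_one y, Int.le_ceil x, Int.ceil_lt_add_one x]

lemma abs_intCast_sub_le_iff_mem_Icc {k : ℤ} {c w : ℝ} :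
    |(k : ℝ) - c| ≤ w ↔ k ∈ Icc ⌈c - w⌉ ⌊c + w⌋ := by
  rw [mem_Icc, Int.ceil_le, Int.le_floor, abs_sub_le_iff]
  constructor <;> rintro ⟨h₁, h₂⟩ <;> constructor <;> linarith

lemma Set.ncard_eq_sum_card_of_forall_mem_iff {α β : Type*} {S : Set (α × β)} (s : Finset α)
    (t : α → Finset β) (h : ∀ a b, (a, b) ∈ S ↔ a ∈ s ∧ b ∈ t a) :
    S.ncard = ∑ a ∈ s, #(t a) := by
  have hS : S = (s.sigma t).map (Equiv.sigmaEquivProd α β).toEmbedding := by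
    ext ⟨a, b⟩
    simp [h]
  rw [hS, Set.ncard_coe_finset, card_map, card_sigma]

lemma sub_nonneg_iff_le_floor_sqrt {E : ℝ} (hE : 0 ≤ E) {n : ℕ} (hn : 0 < n) :
    0 ≤ E / (4 * n) - n ↔ n ≤ ⌊√E / 2⌋₊ := by
  have hn' : (0 : ℝ) < n := by exact_mod_cast hn
  rw [sub_nonneg, le_div_iff₀ (by positivity), Nat.le_floor_iff (by positivity),
    le_div_iff₀ two_pos, Real.le_sqrt (by positivity) hE]
  constructor <;> intro h <;> linarith

lemma four_mul_mul_add_le_iff {E r : ℝ} {n : ℕ} (hn : 0 < n) :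
    4 * n * (n + r) ≤ E ↔ r ≤ E / (4 * n) - n := by
  have hn' : (0 : ℝ) < n := by exact_mod_cast hn
  rw [le_sub_iff_add_le, le_div_iff₀ (by positivity)]
  constructor <;> intro h <;> linarith

lemma weylCount_eq_sum {E : ℝ} (hE : 0 ≤ E) (b : ℝ) :
    weylCount b E = ∑ n ∈ Icc 1 ⌊√E / 2⌋₊,
      #(Icc ⌈b - (E / (4 * n) - n)⌉ ⌊b + (E / (4 * n) - n)⌋) := by
  refine Set.ncard_eq_sum_card_of_forall_mem_iff _ _ fun n k => ?_
  rw [Set.mem_ofPred_eq, mem_Icc, ← abs_intCast_sub_le_iff_mem_Icc, Nat.one_le_iff_ne_zero,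
    ← Nat.pos_iff_ne_zero]
  constructor
  · rintro ⟨hn, hk⟩
    rw [four_mul_mul_add_le_iff hn] at hk
    exact ⟨⟨hn, (sub_nonneg_iff_le_floor_sqrt hE hn).1 ((abs_nonneg _).trans hk)⟩, hk⟩
  · rintro ⟨⟨hn, -⟩, hk⟩
    exact ⟨hn, (four_mul_mul_add_le_iff hn).2 hk⟩

lemma sum_Icc_natCast (M : ℕ) : ∑ n ∈ Icc 1 M, (n : ℝ) = M * (M + 1) / 2 := by
  induction M with
  | zero => simp
  | succ m ih =>
    rw [sum_Icc_succ_top (by omega), ih]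
    push_cast
    ring

lemma sum_Icc_two_mul_sub (E : ℝ) (M : ℕ) :
    ∑ n ∈ Icc 1 M, 2 * (E / (4 * n) - n) = E / 2 * harmonic M - M * (M + 1) := by
  have hterm : ∀ n ∈ Icc 1 M, 2 * (E / (4 * n) - n) = E / 2 * (n : ℝ)⁻¹ - 2 * n := by
    intro n hn
    have hn' : (n : ℝ) ≠ 0 := by have := (mem_Icc.1 hn).1; positivity
    field_simp
    ring
  rw [sum_congr rfl hterm, sum_sub_distrib, ← mul_sum, ← mul_sum, sum_Icc_natCast,
    harmonic_eq_sum_Icc]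
  push_cast
  ring

lemma abs_weylCount_sub_harmonic_le {E : ℝ} (hE : 0 ≤ E) (b : ℝ) :
    |(weylCount b E : ℝ) - (E / 2 * harmonic ⌊√E / 2⌋₊ - ⌊√E / 2⌋₊ * (⌊√E / 2⌋₊ + 1))|
      ≤ ⌊√E / 2⌋₊ := by
  rw [← sum_Icc_two_mul_sub, weylCount_eq_sum hE, Nat.cast_sum, ← sum_sub_distrib]
  calc _ ≤ ∑ n ∈ Icc 1 ⌊√E / 2⌋₊, (1 : ℝ) := by
        refine (abs_sum_le_sum_abs _ _).trans (sum_le_sum fun n hn => ?_)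
        have hw := (sub_nonneg_iff_le_floor_sqrt hE (mem_Icc.1 hn).1).2 (mem_Icc.1 hn).2
        set w := E / (4 * n) - n
        have := abs_card_Icc_ceil_floor_sub_le (by linarith : b - w ≤ b + w)
        rwa [show b + w - (b - w) = 2 * w by ring] at this
    _ = ⌊√E / 2⌋₊ := by simp

lemma log_sub_log_le_div {x y : ℝ} (hx : 0 < x) (hxy : x ≤ y) :
    log y - log x ≤ (y - x) / x := by
  rw [← log_div (by linarith) hx.ne']
  calc log (y / x) ≤ y / x - 1 := log_le_sub_one_of_pos (div_pos (hx.trans_le hxy) hx)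
    _ = (y - x) / x := by field_simp

lemma abs_harmonic_sub_log_sub_eulerMascheroniConstant_le {M : ℕ} (hM : M ≠ 0) :
    |harmonic M - log M - eulerMascheroniConstant| ≤ 1 / M := by
  have hM' : (0 : ℝ) < M := by positivity
  have hlow := eulerMascheroniConstant_lt_eulerMascheroniSeq' M
  have hup := eulerMascheroniSeq_lt_eulerMascheroniConstant M
  rw [eulerMascheroniSeq', if_neg hM] at hlow
  rw [eulerMascheroniSeq] at hup
  have hlog := log_sub_log_le_div hM' (le_add_of_nonneg_right zero_le_one)
  rw [add_sub_cancel_left] at hlog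
  rw [abs_le]
  constructor <;> linarith

-- The smooth part `(E/2) H_M - M(M+1)` of the count, in the variable `s = √E`.
lemma abs_harmonic_main_term_sub_le {M : ℕ} (hM : M ≠ 0) {s : ℝ} (hMs : 2 * M ≤ s)
    (hsM : s < 2 * M + 2) :
    |s ^ 2 / 2 * harmonic M - M * (M + 1) - s ^ 2 / 2 * log s
      - (eulerMascheroniConstant - log 2 - 1 / 2) * (s ^ 2 / 2)| ≤ 5 * s := by
  have hM' : (0 : ℝ) < M := by positivity
  have hM1 : (1 : ℝ) ≤ M := by exact_mod_cast Nat.one_le_iff_ne_zero.2 hM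
  have hs : 0 < s := by linarith
  have hscale : s ^ 2 / 2 * (1 / M) ≤ 2 * s := by
    rw [← div_eq_mul_one_div, div_div, div_le_iff₀ (by positivity)]
    nlinarith
  have hscaled : ∀ X : ℝ, |X| ≤ 1 / M → |s ^ 2 / 2 * X| ≤ 2 * s := fun X hX => by
    rw [abs_mul, abs_of_nonneg (by positivity)]
    exact (mul_le_mul_of_nonneg_left hX (by positivity)).trans hscale
  have hharm := hscaled _ (abs_harmonic_sub_log_sub_eulerMascheroniConstant_le hM)
  have hlog : |log 2 + log M - log s| ≤ 1 / M := by
    have h2M : (0 : ℝ) < 2 * M := by positivity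
    rw [← log_mul two_ne_zero hM'.ne', abs_sub_comm, abs_of_nonneg
      (sub_nonneg.2 (log_le_log h2M hMs))]
    refine (log_sub_log_le_div h2M hMs).trans ?_
    rw [div_le_div_iff₀ h2M hM']
    nlinarith
  have hsq : |s ^ 2 / 4 - M ^ 2 - M| ≤ s := by
    rw [abs_le]
    constructor <;> nlinarith
  calc _ = |s ^ 2 / 2 * (harmonic M - log M - eulerMascheroniConstant)
        + s ^ 2 / 2 * (log 2 + log M - log s) + (s ^ 2 / 4 - M ^ 2 - M)| := by ring_nf
    _ ≤ _ := abs_add_three _ _ _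
    _ ≤ 5 * s := by linarith [hscaled _ hlog]

lemma weylCount_eq_zero_of_lt_four {E : ℝ} (hE₀ : 0 ≤ E) (hE : E < 4) (b : ℝ) :
    weylCount b E = 0 := by
  have hsqrt : √E < 2 := (sqrt_lt' two_pos).2 (by linarith)
  rw [weylCount_eq_sum hE₀, Nat.floor_eq_zero.2 (by linarith)]
  simp

lemma abs_weylCount_sub_le_of_lt_four {E : ℝ} (hE₁ : 1 ≤ E) (hE : E < 4) (b : ℝ) :
    |(weylCount b E : ℝ) - E / 4 * log E
      - (eulerMascheroniConstant - log 2 - 1 / 2) * (E / 2)| ≤ 6 * √E := by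
  rw [weylCount_eq_zero_of_lt_four (by linarith) hE]
  have hlog₀ := log_nonneg hE₁
  have hlog₁ := log_le_sub_one_of_pos (by linarith : 0 < E)
  have hsqrt : 1 ≤ √E := one_le_sqrt.2 hE₁
  rw [abs_le]
  constructor <;> nlinarith [one_half_lt_eulerMascheroniConstant,
    eulerMascheroniConstant_lt_two_thirds, log_two_gt_d9, log_two_lt_d9]

lemma abs_weylCount_sub_le_of_four_le {E : ℝ} (hE : 4 ≤ E) (b : ℝ) :
    |(weylCount b E : ℝ) - E / 4 * log E
      - (eulerMascheroniConstant - log 2 - 1 / 2) * (E / 2)| ≤ 6 * √E := by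
  obtain ⟨s, hs₀, rfl⟩ : ∃ s, 0 ≤ s ∧ E = s ^ 2 :=
    ⟨√E, sqrt_nonneg E, (sq_sqrt (by linarith)).symm⟩
  have hs : 2 ≤ s := by nlinarith
  have hcount := abs_weylCount_sub_harmonic_le (sq_nonneg s) b
  rw [sqrt_sq hs₀] at hcount ⊢
  set M := ⌊s / 2⌋₊
  have hMs : 2 * M ≤ s := by linarith [Nat.floor_le (by positivity : 0 ≤ s / 2)]
  have hsM : s < 2 * M + 2 := by linarith [Nat.lt_floor_add_one (s / 2)]
  have hM : M ≠ 0 := Nat.one_le_iff_ne_zero.1 (Nat.le_floor (by push_cast; linarith))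
  have hmain := abs_harmonic_main_term_sub_le hM hMs hsM
  rw [log_pow, Nat.cast_ofNat]
  rw [abs_le] at hcount hmain ⊢
  constructor <;> linarith [hcount.1, hcount.2, hmain.1, hmain.2]

/-- Weyl's law for the Aharonov–Bohm Laplacian on the Grushin sphere, uniform
in the flux `b ∈ [−1/2,1/2]`: there is `C > 0` such that for all `E ≥ 1`,
`|N_b(E) − (E/4)·log E − (γ − log 2 − 1/2)·(E/2)| ≤ C√E`, where
`N_b(E) = #{(n,k) : 4n(n+|k−b|) ≤ E}`. In particular the first two terms of
the asymptotics are independent of `b`. -/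
theorem grushin_sphere_ab_weyl_law_uniform :
    ∃ C : ℝ, 0 < C ∧ ∀ b : ℝ, b ∈ Set.Icc (-(1:ℝ)/2) (1/2) → ∀ E : ℝ, 1 ≤ E →
      |(Set.ncard {p : ℕ × ℤ | 0 < p.1 ∧
          (4 * p.1 * ((p.1 : ℝ) + |(p.2 : ℝ) - b|) ≤ E)} : ℝ)
        - E / 4 * Real.log E
        - (Real.eulerMascheroniConstant - Real.log 2 - 1 / 2) * (E / 2)|
      ≤ C * Real.sqrt E := by
  refine ⟨6, by norm_num, fun b _ E hE => ?_⟩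
  rcases lt_or_ge E 4 with hE4 | hE4
  · exact abs_weylCount_sub_le_of_lt_four hE hE4 b
  · exact abs_weylCount_sub_le_of_four_le hE4 b
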